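/- Let n ≥ 1 be an integer. For every valid configuration c ∈ Ω'_n there exist strictly increasing maps A, B : ℤ → ℤ such that the set of positions of junction tiles in c is the Cartesian product c^{-1}(J'_n) = A(ℤ) × B(ℤ), and for every k ∈ ℤ one has A(k+1) − A(k) ∈ {n, n+1} and B(k+1) − B(k) ∈ {n, n+1}. -/

import Mathlib

structure WangTile (C : Type*) where
  right : C
  top : C
  left : C
  bottom : C
deriving DecidableEq

abbrev Lbl : Type := ℤ × ℤ × ℤ

def Vn (n : ℤ) : Set Lbl :=
  {v | 0 ≤ v.1 ∧ v.1 ≤ v.2.1 ∧ v.2.1 ≤ 1 ∧ v.2.1 ≤ v.2.2 ∧ v.2.2 ≤ n + 1}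

def hatT {C : Type*} (t : WangTile C) : WangTile C :=
  ⟨t.top, t.right, t.bottom, t.left⟩

def whiteTiles (n : ℤ) : Set (WangTile Lbl) :=
  {t | ∃ i j : ℤ, 1 ≤ i ∧ i ≤ n ∧ 1 ≤ j ∧ j ≤ n ∧
    t = ⟨(1, 1, i + 1), (1, 1, j + 1), (1, 1, i), (1, 1, j)⟩}

def blueH (n : ℤ) : Set (WangTile Lbl) :=
  {t | ∃ i : ℤ, 0 ≤ i ∧ i ≤ n ∧ t = ⟨(0, 0, i + 1), (1, 1, 1), (0, 0, i), (1, 1, n)⟩}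

def greenH (n : ℤ) : Set (WangTile Lbl) :=
  {t | ∃ i : ℤ, 0 ≤ i ∧ i ≤ n ∧ t = ⟨(0, 1, i + 1), (1, 1, 1), (0, 0, i), (1, 1, n + 1)⟩}

def yellowH (n : ℤ) : Set (WangTile Lbl) :=
  {t | ∃ i : ℤ, 1 ≤ i ∧ i ≤ n ∧ t = ⟨(0, 1, i + 1), (1, 1, 2), (0, 1, i), (1, 1, n + 1)⟩}

def antiH (n : ℤ) : Set (WangTile Lbl) :=
  {t | ∃ i : ℤ, 1 ≤ i ∧ i ≤ n ∧ t = ⟨(0, 0, i + 1), (1, 1, 2), (0, 1, i), (1, 1, n)⟩}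

def junctionTile (n k l r s : ℤ) : WangTile Lbl :=
  ⟨(0, k, l), (0, r, s), (0, s, r + n), (0, l, k + n)⟩

def jPairs : Set (ℤ × ℤ) := {(0, 0), (0, 1), (1, 1)}

def junctions (n : ℤ) : Set (WangTile Lbl) :=
  {t | ∃ k l r s : ℤ, (k, l) ∈ jPairs ∧ (r, s) ∈ jPairs ∧ t = junctionTile n k l r s}

def Text (n : ℤ) : Set (WangTile Lbl) :=
  whiteTiles n ∪ blueH n ∪ greenH n ∪ yellowH n ∪ antiH n ∪
    hatT '' blueH n ∪ hatT '' greenH n ∪ hatT '' yellowH n ∪ hatT '' antiH n ∪ junctions n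

def Dset (n : ℤ) : Set (WangTile Lbl) :=
  {(⟨(0, 0, n + 1), (1, 1, 1), (0, 0, n), (1, 1, n)⟩ : WangTile Lbl),
    hatT (⟨(0, 0, n + 1), (1, 1, 1), (0, 0, n), (1, 1, n)⟩ : WangTile Lbl),
    junctionTile n 0 0 1 1, junctionTile n 1 1 0 0}

def Tmet (n : ℤ) : Set (WangTile Lbl) :=
  Text n \ (antiH n ∪ hatT '' antiH n ∪ Dset n)

def ValidConfig {C : Type*} (T : Set (WangTile C)) (x : ℤ × ℤ → WangTile C) : Prop :=
  (∀ m, x m ∈ T) ∧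
    (∀ m : ℤ × ℤ, (x m).right = (x (m.1 + 1, m.2)).left) ∧
    (∀ m : ℤ × ℤ, (x m).top = (x (m.1, m.2 + 1)).bottom)

def ValidPattern {C : Type*} (T : Set (WangTile C)) (w h : ℕ) (p : ℕ → ℕ → WangTile C) : Prop :=
  (∀ i j, i < w → j < h → p i j ∈ T) ∧
    (∀ i j, i + 1 < w → j < h → (p i j).right = (p (i + 1) j).left) ∧
    (∀ i j, i < w → j + 1 < h → (p i j).top = (p i (j + 1)).bottom)

def bottomWord {C : Type*} (w : ℕ) (p : ℕ → ℕ → WangTile C) : List C :=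
  (List.range w).map fun i => (p i 0).bottom

def topWord {C : Type*} (w h : ℕ) (p : ℕ → ℕ → WangTile C) : List C :=
  (List.range w).map fun i => (p i (h - 1)).top

def leftWord {C : Type*} (h : ℕ) (p : ℕ → ℕ → WangTile C) : List C :=
  (List.range h).map fun j => (p 0 j).left

def rightWord {C : Type*} (w h : ℕ) (p : ℕ → ℕ → WangTile C) : List C :=
  (List.range h).map fun j => (p (w - 1) j).right

def tau (n : ℤ) (v : Lbl) : List Lbl :=
  if v.1 = v.2.2 then
    (0, v.1 - v.2.1 + 1, n + 1) :: List.replicate (n - v.2.2).toNat (1, 1, n + 1)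
  else
    (0, v.1 - v.2.1 + 1, n) ::
      (List.replicate (v.2.2 - v.1 - 1).toNat (1, 1, n) ++
        List.replicate (n + 1 - v.2.2).toNat (1, 1, n + 1))

/-!
Every tile has `right.1 = left.1` and `top.1 = bottom.1`, so the first label coordinate (the *type*,
`0` or `1`) is constant along rows and along columns, and junctions sit exactly where a row of type
0 crosses a column of type 0. The junction set is therefore a product, and by the symmetry `hatT` it
suffices to study the columns of type 0. Along any row, the third coordinate of the left label goes
up by one across each column of type 1, where it stays in `[0, n]`; at a column of type 0 it lies in
`[n, n + 1]`, and right after it restarts from `[0, 1]` in a row of type 0 and from `[1, 2]` in a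
row of type 1. So any `n + 2` consecutive columns contain one of type 0, and consecutive columns of
type 0 are at least `n` apart (read off a row of type 0) and at most `n + 1` apart (read off a row
of type 1). If every row has type 0, the lower bound for rows forces `n = 1`; the horizontal tiles
then pass the middle coordinate of their left label diagonally up and to the right, which rules out
a gap of `3`.
-/

-- `B'ₙ`, `Gₙ`, `Yₙ`, `Aₙ` are the cases `(a, b) = (0, 0), (0, 1), (1, 1), (1, 0)`.
def horizontalTiles (n : ℤ) : Set (WangTile Lbl) :=
  {t | ∃ a b i : ℤ, 0 ≤ a ∧ a ≤ 1 ∧ 0 ≤ b ∧ b ≤ 1 ∧ 0 ≤ i ∧ a ≤ i ∧ i ≤ n ∧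
    t = ⟨(0, b, i + 1), (1, 1, 1 + a), (0, a, i), (1, 1, n + b)⟩}

lemma bounds_of_mem_jPairs {k l : ℤ} (h : (k, l) ∈ jPairs) : 0 ≤ k ∧ k ≤ l ∧ l ≤ 1 := by
  rcases h with h | h | h <;> simp_all

lemma mem_Text_cases {n : ℤ} {t : WangTile Lbl} (ht : t ∈ Text n) :
    t ∈ whiteTiles n ∨ t ∈ horizontalTiles n ∨ t ∈ hatT '' horizontalTiles n ∨
      t ∈ junctions n := by
  have horiz : ∀ a b i : ℤ, 0 ≤ i → a ≤ i → i ≤ n → 0 ≤ a ∧ a ≤ 1 ∧ 0 ≤ b ∧ b ≤ 1 →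
      (⟨(0, b, i + 1), (1, 1, 1 + a), (0, a, i), (1, 1, n + b)⟩ : WangTile Lbl) ∈
        horizontalTiles n :=
    fun a b i hi hai hin ⟨ha, ha', hb, hb'⟩ => ⟨a, b, i, ha, ha', hb, hb', hi, hai, hin, rfl⟩
  rcases ht with ((((((((hw | ⟨i, h0, hi, rfl⟩) | ⟨i, h0, hi, rfl⟩) | ⟨i, h1, hi, rfl⟩) |
    ⟨i, h1, hi, rfl⟩) | ⟨_, ⟨i, h0, hi, rfl⟩, rfl⟩) | ⟨_, ⟨i, h0, hi, rfl⟩, rfl⟩) |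
    ⟨_, ⟨i, h1, hi, rfl⟩, rfl⟩) | ⟨_, ⟨i, h1, hi, rfl⟩, rfl⟩) | hj
  · exact .inl hw
  · exact .inr <| .inl <| by simpa using horiz 0 0 i h0 h0 hi (by norm_num)
  · exact .inr <| .inl <| by simpa using horiz 0 1 i h0 h0 hi (by norm_num)
  · exact .inr <| .inl <| by simpa using horiz 1 1 i (by omega) h1 hi (by norm_num)
  · exact .inr <| .inl <| by simpa using horiz 1 0 i (by omega) h1 hi (by norm_num)
  · exact .inr <| .inr <| .inl ⟨_, by simpa using horiz 0 0 i h0 h0 hi (by norm_num), rfl⟩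
  · exact .inr <| .inr <| .inl ⟨_, by simpa using horiz 0 1 i h0 h0 hi (by norm_num), rfl⟩
  · exact .inr <| .inr <| .inl ⟨_, by simpa using horiz 1 1 i (by omega) h1 hi (by norm_num), rfl⟩
  · exact .inr <| .inr <| .inl ⟨_, by simpa using horiz 1 0 i (by omega) h1 hi (by norm_num), rfl⟩
  · exact .inr <| .inr <| .inr hj

section Tile

variable {n : ℤ} {t : WangTile Lbl}

lemma right_fst_eq_left_fst (ht : t ∈ Text n) : t.right.1 = t.left.1 := by
  rcases mem_Text_cases ht with ⟨i, j, -, -, -, -, rfl⟩ | ⟨a, b, i, -, -, -, -, -, -, -, rfl⟩ |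
    ⟨_, ⟨a, b, i, -, -, -, -, -, -, -, rfl⟩, rfl⟩ | ⟨k, l, r, s, -, -, rfl⟩ <;> rfl

lemma left_fst_eq_zero_or_one (ht : t ∈ Text n) : t.left.1 = 0 ∨ t.left.1 = 1 := by
  rcases mem_Text_cases ht with ⟨i, j, -, -, -, -, rfl⟩ | ⟨a, b, i, -, -, -, -, -, -, -, rfl⟩ |
    ⟨_, ⟨a, b, i, -, -, -, -, -, -, -, rfl⟩, rfl⟩ | ⟨k, l, r, s, -, -, rfl⟩ <;>
    simp [hatT, junctionTile]

lemma mem_junctions_iff_of_mem_Text (ht : t ∈ Text n) :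
    t ∈ junctions n ↔ t.left.1 = 0 ∧ t.bottom.1 = 0 := by
  rcases mem_Text_cases ht with ⟨i, j, -, -, -, -, rfl⟩ | ⟨a, b, i, -, -, -, -, -, -, -, rfl⟩ |
    ⟨_, ⟨a, b, i, -, -, -, -, -, -, -, rfl⟩, rfl⟩ | hj
  · simp [junctions, junctionTile]
  · simp [junctions, junctionTile]
  · simp [junctions, junctionTile, hatT]
  · refine iff_of_true hj ?_
    obtain ⟨k, l, r, s, -, -, rfl⟩ := hj
    simp [junctionTile]

lemma right_thd_eq_of_bottom_fst_eq_one (ht : t ∈ Text n) (h : t.bottom.1 = 1) :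
    t.right.2.2 = t.left.2.2 + 1 ∧ 0 ≤ t.left.2.2 ∧ t.left.2.2 ≤ n := by
  rcases mem_Text_cases ht with ⟨i, j, hi, hi', -, -, rfl⟩ |
    ⟨a, b, i, -, -, -, -, hi, -, hi', rfl⟩ | ⟨_, ⟨a, b, i, -, -, -, -, -, -, -, rfl⟩, rfl⟩ |
    ⟨k, l, r, s, -, -, rfl⟩
  · dsimp only; omega
  · dsimp only; omega
  · simp [hatT] at h
  · simp [junctionTile] at h

lemma thd_bounds_of_bottom_fst_eq_zero (ht : t ∈ Text n) (h : t.bottom.1 = 0) :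
    n ≤ t.left.2.2 ∧ t.left.2.2 ≤ n + 1 ∧ t.left.1 ≤ t.right.2.2 ∧ t.right.2.2 ≤ t.left.1 + 1 := by
  rcases mem_Text_cases ht with ⟨i, j, -, -, -, -, rfl⟩ | ⟨a, b, i, -, -, -, -, -, -, -, rfl⟩ |
    ⟨_, ⟨a, b, i, ha, ha', hb, hb', -, -, -, rfl⟩, rfl⟩ | ⟨k, l, r, s, hkl, hrs, rfl⟩
  · simp at h
  · simp at h
  · simp only [hatT]; omega
  · have := bounds_of_mem_jPairs hkl
    have := bounds_of_mem_jPairs hrs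
    simp only [junctionTile]; omega

lemma thd_eq_of_horizontal (ht : t ∈ Text n) (h0 : t.left.1 = 0) (h1 : t.bottom.1 = 1) :
    t.top.2.2 = 1 + t.left.2.1 ∧ t.bottom.2.2 = n + t.right.2.1 := by
  rcases mem_Text_cases ht with ⟨i, j, -, -, -, -, rfl⟩ | ⟨a, b, i, -, -, -, -, -, -, -, rfl⟩ |
    ⟨_, ⟨a, b, i, -, -, -, -, -, -, -, rfl⟩, rfl⟩ | ⟨k, l, r, s, -, -, rfl⟩
  · simp at h0
  · simp
  · simp [hatT] at h0
  · simp [junctionTile] at h1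

lemma snd_bounds_of_mem_junctions (ht : t ∈ junctions n) :
    0 ≤ t.right.2.1 ∧ t.right.2.1 ≤ t.right.2.2 ∧ t.left.2.2 ≤ t.left.2.1 + n := by
  obtain ⟨k, l, r, s, hkl, hrs, rfl⟩ := ht
  have := bounds_of_mem_jPairs hkl
  have := bounds_of_mem_jPairs hrs
  simp only [junctionTile]; omega

lemma hatT_mem_Text : ∀ t ∈ Text n, hatT t ∈ Text n := by
  intro t ht
  rcases ht with ((((((((⟨i, j, h1, h2, h3, h4, rfl⟩ | hb) | hg) | hy) | ha) | hb') | hg') | hy') |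
    ha') | ⟨k, l, r, s, hkl, hrs, rfl⟩
  · exact .inl <| .inl <| .inl <| .inl <| .inl <| .inl <| .inl <| .inl <| .inl
      ⟨j, i, h3, h4, h1, h2, rfl⟩
  · exact .inl <| .inl <| .inl <| .inl <| .inr ⟨t, hb, rfl⟩
  · exact .inl <| .inl <| .inl <| .inr ⟨t, hg, rfl⟩
  · exact .inl <| .inl <| .inr ⟨t, hy, rfl⟩
  · exact .inl <| .inr ⟨t, ha, rfl⟩
  · obtain ⟨s, hs, rfl⟩ := hb'
    exact .inl <| .inl <| .inl <| .inl <| .inl <| .inl <| .inl <| .inl <| .inr hs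
  · obtain ⟨s, hs, rfl⟩ := hg'
    exact .inl <| .inl <| .inl <| .inl <| .inl <| .inl <| .inl <| .inr hs
  · obtain ⟨s, hs, rfl⟩ := hy'
    exact .inl <| .inl <| .inl <| .inl <| .inl <| .inl <| .inr hs
  · obtain ⟨s, hs, rfl⟩ := ha'
    exact .inl <| .inl <| .inl <| .inl <| .inl <| .inr hs
  · exact .inr ⟨r, s, k, l, hrs, hkl, rfl⟩

end Tile

lemma Int.exists_strictMono_range_eq {S : Set ℤ} (hup : ¬BddAbove S) (hdown : ¬BddBelow S) :
    ∃ A : ℤ → ℤ, StrictMono A ∧ Set.range A = S ∧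
      ∀ k w, A k < w → w < A (k + 1) → w ∉ S := by
  classical
  rw [not_bddAbove_iff] at hup
  rw [not_bddBelow_iff] at hdown
  have : Nonempty S := let ⟨y, hy, _⟩ := hup 0; ⟨⟨y, hy⟩⟩
  have : NoMaxOrder S := ⟨fun x => let ⟨y, hy, hxy⟩ := hup x; ⟨⟨y, hy⟩, hxy⟩⟩
  have : NoMinOrder S := ⟨fun x => let ⟨y, hy, hxy⟩ := hdown x; ⟨⟨y, hy⟩, hxy⟩⟩
  let := LinearLocallyFiniteOrder.succOrder S
  let := LinearLocallyFiniteOrder.predOrder S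
  let e : S ≃o ℤ := orderIsoIntOfLinearSuccPredArch
  refine ⟨fun k => e.symm k, e.symm.strictMono, ?_, fun k w hk hk' hw => ?_⟩
  · ext s
    exact ⟨fun ⟨k, hk⟩ => hk ▸ (e.symm k).2, fun hs => ⟨e ⟨s, hs⟩, by simp⟩⟩
  · have h₁ : k < e ⟨w, hw⟩ := e.symm_apply_lt.mp hk
    have h₂ : e ⟨w, hw⟩ < k + 1 := e.lt_symm_apply.mp hk'
    omega

lemma Int.eq_add_sub_of_forall_succ {L : ℤ → ℤ} {a b : ℤ} (hab : a ≤ b)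
    (h : ∀ w, a ≤ w → w < b → L (w + 1) = L w + 1) : L b = L a + (b - a) := by
  induction b, hab using Int.leInduction with
  | base => simp
  | succ b hab ih =>
    rw [h b hab (lt_add_one b), ih fun w hw hwb => h w hw (by omega)]
    ring

def transposeConfig {C : Type*} (c : ℤ × ℤ → WangTile C) : ℤ × ℤ → WangTile C :=
  fun m => hatT (c m.swap)

-- The rows of type 0 are `junctionColumns (transposeConfig c)`.
def junctionColumns (c : ℤ × ℤ → WangTile Lbl) : Set ℤ :=
  {x | (c (x, 0)).bottom.1 = 0}

namespace ValidConfig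

section General

variable {C : Type*} {T : Set (WangTile C)} {c : ℤ × ℤ → WangTile C}

lemma transpose (hc : ValidConfig T c) (hT : ∀ t ∈ T, hatT t ∈ T) :
    ValidConfig T (transposeConfig c) :=
  ⟨fun _ => hT _ (hc.1 _), fun m => hc.2.2 m.swap, fun m => hc.2.1 m.swap⟩

lemma bottom_eq_of_forall_top_eq {α : Type*} (hc : ValidConfig T c) (f : C → α)
    (hf : ∀ t ∈ T, f t.top = f t.bottom) (x y : ℤ) :
    f (c (x, y)).bottom = f (c (x, 0)).bottom := by
  induction y using Int.induction_on with
  | zero => rfl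
  | succ y ih => rw [← hc.2.2 (x, y), hf _ (hc.1 _), ih]
  | pred y ih =>
    have hv := hc.2.2 (x, -y - 1)
    rw [sub_add_cancel] at hv
    rw [← ih, ← hv, hf _ (hc.1 _)]

end General

variable {n : ℤ} {c : ℤ × ℤ → WangTile Lbl}

lemma bottom_fst_eq (hc : ValidConfig (Text n) c) (x y : ℤ) :
    (c (x, y)).bottom.1 = (c (x, 0)).bottom.1 :=
  hc.bottom_eq_of_forall_top_eq (·.1) (fun t ht => right_fst_eq_left_fst (hatT_mem_Text t ht)) x y

lemma left_fst_eq (hc : ValidConfig (Text n) c) (x y : ℤ) :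
    (c (x, y)).left.1 = (c (0, y)).left.1 :=
  (hc.transpose hatT_mem_Text).bottom_fst_eq y x

lemma bottom_fst_eq_zero_of_mem (hc : ValidConfig (Text n) c) {x : ℤ}
    (hx : x ∈ junctionColumns c) (y : ℤ) : (c (x, y)).bottom.1 = 0 :=
  (hc.bottom_fst_eq x y).trans hx

lemma bottom_fst_eq_one_of_not_mem (hc : ValidConfig (Text n) c) {x : ℤ}
    (hx : x ∉ junctionColumns c) (y : ℤ) : (c (x, y)).bottom.1 = 1 :=
  (left_fst_eq_zero_or_one (hatT_mem_Text _ (hc.1 (x, y)))).resolve_left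
    fun h => hx ((hc.bottom_fst_eq x y).symm.trans h)

lemma left_fst_eq_zero_of_mem (hc : ValidConfig (Text n) c) {y : ℤ}
    (hy : y ∈ junctionColumns (transposeConfig c)) (x : ℤ) : (c (x, y)).left.1 = 0 :=
  (hc.transpose hatT_mem_Text).bottom_fst_eq_zero_of_mem hy x

lemma left_fst_eq_one_of_not_mem (hc : ValidConfig (Text n) c) {y : ℤ}
    (hy : y ∉ junctionColumns (transposeConfig c)) (x : ℤ) : (c (x, y)).left.1 = 1 :=
  (hc.transpose hatT_mem_Text).bottom_fst_eq_one_of_not_mem hy x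

lemma mem_junctions_iff (hc : ValidConfig (Text n) c) (x y : ℤ) :
    c (x, y) ∈ junctions n ↔ x ∈ junctionColumns c ∧ y ∈ junctionColumns (transposeConfig c) := by
  rw [mem_junctions_iff_of_mem_Text (hc.1 _), hc.left_fst_eq, hc.bottom_fst_eq, and_comm]
  rfl

lemma left_thd_eq_add (hc : ValidConfig (Text n) c) (y : ℤ) {a b : ℤ} (hab : a ≤ b)
    (h : ∀ w, a ≤ w → w < b → w ∉ junctionColumns c) :
    (c (b, y)).left.2.2 = (c (a, y)).left.2.2 + (b - a) :=
  Int.eq_add_sub_of_forall_succ (L := fun w => (c (w, y)).left.2.2) hab fun w hw hwb => by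
    rw [← hc.2.1 (w, y)]
    exact (right_thd_eq_of_bottom_fst_eq_one (hc.1 _)
      (hc.bottom_fst_eq_one_of_not_mem (h w hw hwb) y)).1

lemma exists_mem_junctionColumns (hc : ValidConfig (Text n) c) (hn : 0 ≤ n) (x : ℤ) :
    ∃ s ∈ junctionColumns c, x ≤ s ∧ s ≤ x + n + 1 := by
  by_contra! h
  have hgap : ∀ w, x ≤ w → w ≤ x + n + 1 → w ∉ junctionColumns c :=
    fun w hw hw' hmem => (h w hmem hw).not_ge hw'
  have hcount := hc.left_thd_eq_add 0 (b := x + n + 1) (by omega) fun w hw hw' => hgap w hw hw'.le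
  have hx := right_thd_eq_of_bottom_fst_eq_one (hc.1 (x, 0))
    (hc.bottom_fst_eq_one_of_not_mem (hgap x le_rfl (by omega)) 0)
  have hx' := right_thd_eq_of_bottom_fst_eq_one (hc.1 (x + n + 1, 0))
    (hc.bottom_fst_eq_one_of_not_mem (hgap _ (by omega) le_rfl) 0)
  omega

lemma not_bddAbove_junctionColumns (hc : ValidConfig (Text n) c) (hn : 0 ≤ n) :
    ¬BddAbove (junctionColumns c) :=
  not_bddAbove_iff.mpr fun x =>
    let ⟨s, hs, hxs, _⟩ := hc.exists_mem_junctionColumns hn (x + 1)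
    ⟨s, hs, by omega⟩

lemma not_bddBelow_junctionColumns (hc : ValidConfig (Text n) c) (hn : 0 ≤ n) :
    ¬BddBelow (junctionColumns c) :=
  not_bddBelow_iff.mpr fun x =>
    let ⟨s, hs, _, hsx⟩ := hc.exists_mem_junctionColumns hn (x - n - 2)
    ⟨s, hs, by omega⟩

section Consecutive

variable {x₀ x₁ : ℤ}

lemma left_thd_eq_right_thd_add (hc : ValidConfig (Text n) c) (y : ℤ) (hlt : x₀ < x₁)
    (hgap : ∀ w, x₀ < w → w < x₁ → w ∉ junctionColumns c) :
    (c (x₁, y)).left.2.2 = (c (x₀, y)).right.2.2 + (x₁ - x₀ - 1) := by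
  rw [hc.2.1 (x₀, y), hc.left_thd_eq_add y (a := x₀ + 1) hlt fun w hw hw' => hgap w hw hw']
  ring

lemma le_sub_of_consecutive (hc : ValidConfig (Text n) c) (hn : 0 ≤ n)
    (h₀ : x₀ ∈ junctionColumns c) (h₁ : x₁ ∈ junctionColumns c) (hlt : x₀ < x₁)
    (hgap : ∀ w, x₀ < w → w < x₁ → w ∉ junctionColumns c) : n ≤ x₁ - x₀ := by
  obtain ⟨y, hy, -⟩ := (hc.transpose hatT_mem_Text).exists_mem_junctionColumns hn 0
  have hcount := hc.left_thd_eq_right_thd_add y hlt hgap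
  have hx₀ := thd_bounds_of_bottom_fst_eq_zero (hc.1 _) (hc.bottom_fst_eq_zero_of_mem h₀ y)
  have hx₁ := thd_bounds_of_bottom_fst_eq_zero (hc.1 _) (hc.bottom_fst_eq_zero_of_mem h₁ y)
  have hrow := hc.left_fst_eq_zero_of_mem hy x₀
  omega

lemma sub_le_of_consecutive_of_not_mem (hc : ValidConfig (Text n) c)
    (h₀ : x₀ ∈ junctionColumns c) (h₁ : x₁ ∈ junctionColumns c) (hlt : x₀ < x₁)
    (hgap : ∀ w, x₀ < w → w < x₁ → w ∉ junctionColumns c) {y : ℤ}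
    (hy : y ∉ junctionColumns (transposeConfig c)) : x₁ - x₀ ≤ n + 1 := by
  have hcount := hc.left_thd_eq_right_thd_add y hlt hgap
  have hx₀ := thd_bounds_of_bottom_fst_eq_zero (hc.1 _) (hc.bottom_fst_eq_zero_of_mem h₀ y)
  have hx₁ := thd_bounds_of_bottom_fst_eq_zero (hc.1 _) (hc.bottom_fst_eq_zero_of_mem h₁ y)
  have hrow := hc.left_fst_eq_one_of_not_mem hy x₀
  omega

lemma left_snd_add_of_horizontal (hc : ValidConfig (Text n) c) {x y : ℤ}
    (hx : x ∉ junctionColumns c) (hy : y ∈ junctionColumns (transposeConfig c))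
    (hy' : y + 1 ∈ junctionColumns (transposeConfig c)) :
    (c (x + 1, y + 1)).left.2.1 + n = (c (x, y)).left.2.1 + 1 := by
  have h₀ := thd_eq_of_horizontal (hc.1 (x, y)) (hc.left_fst_eq_zero_of_mem hy x)
    (hc.bottom_fst_eq_one_of_not_mem hx y)
  have h₁ := thd_eq_of_horizontal (hc.1 (x, y + 1)) (hc.left_fst_eq_zero_of_mem hy' x)
    (hc.bottom_fst_eq_one_of_not_mem hx (y + 1))
  have hv := congrArg (·.2.2) (hc.2.2 (x, y))
  rw [← hc.2.1 (x, y + 1)]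
  simp only at hv
  omega

lemma sub_le_of_consecutive_of_forall_mem (hc : ValidConfig (Text n) c) (hn : 1 ≤ n)
    (h₀ : x₀ ∈ junctionColumns c) (h₁ : x₁ ∈ junctionColumns c) (hlt : x₀ < x₁)
    (hgap : ∀ w, x₀ < w → w < x₁ → w ∉ junctionColumns c)
    (hrows : ∀ y, y ∈ junctionColumns (transposeConfig c)) : x₁ - x₀ ≤ n + 1 := by
  obtain rfl : n = 1 := by
    have := (hc.transpose hatT_mem_Text).le_sub_of_consecutive (by omega) (hrows 0) (hrows 1)
      one_pos (by omega)
    omega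
  by_contra! hbig
  have hforced : ∀ y, (c (x₀, y)).right.2.2 = 0 ∧ (c (x₁, y)).left.2.2 = 2 ∧ x₁ = x₀ + 3 := by
    intro y
    have hcount := hc.left_thd_eq_right_thd_add y hlt hgap
    have hx₀ := thd_bounds_of_bottom_fst_eq_zero (hc.1 _) (hc.bottom_fst_eq_zero_of_mem h₀ y)
    have hx₁ := thd_bounds_of_bottom_fst_eq_zero (hc.1 _) (hc.bottom_fst_eq_zero_of_mem h₁ y)
    have hrow := hc.left_fst_eq_zero_of_mem (hrows y) x₀
    omega
  obtain ⟨hright, -, rfl⟩ := hforced 0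
  have hleft := (hforced 2).2.1
  have hj₀ := snd_bounds_of_mem_junctions ((hc.mem_junctions_iff x₀ 0).mpr ⟨h₀, hrows 0⟩)
  have hj₁ := snd_bounds_of_mem_junctions ((hc.mem_junctions_iff _ 2).mpr ⟨h₁, hrows 2⟩)
  -- The middle coordinate `0` leaving the junction at `x₀` in row `0` reaches the junction at
  -- `x₀ + 3` in row `2`, whose left label needs middle coordinate `1`.
  have hstep₁ := hc.left_snd_add_of_horizontal (x := x₀ + 1) (y := 0)
    (hgap _ (by omega) (by omega)) (hrows 0) (hrows 1)
  have hstep₂ := hc.left_snd_add_of_horizontal (x := x₀ + 2) (y := 1)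
    (hgap _ (by omega) (by omega)) (hrows 1) (hrows 2)
  have hmatch : (c (x₀, 0)).right = (c (x₀ + 1, 0)).left := hc.2.1 (x₀, 0)
  rw [hmatch] at hright hj₀
  norm_num [add_assoc] at hstep₁ hstep₂
  omega

lemma sub_le_of_consecutive (hc : ValidConfig (Text n) c) (hn : 1 ≤ n)
    (h₀ : x₀ ∈ junctionColumns c) (h₁ : x₁ ∈ junctionColumns c) (hlt : x₀ < x₁)
    (hgap : ∀ w, x₀ < w → w < x₁ → w ∉ junctionColumns c) : x₁ - x₀ ≤ n + 1 := by
  by_cases hrows : ∀ y, y ∈ junctionColumns (transposeConfig c)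
  · exact hc.sub_le_of_consecutive_of_forall_mem hn h₀ h₁ hlt hgap hrows
  · obtain ⟨y, hy⟩ := not_forall.mp hrows
    exact hc.sub_le_of_consecutive_of_not_mem h₀ h₁ hlt hgap hy

end Consecutive

lemma exists_strictMono_range_eq_junctionColumns (hc : ValidConfig (Text n) c) (hn : 1 ≤ n) :
    ∃ A : ℤ → ℤ, StrictMono A ∧ Set.range A = junctionColumns c ∧
      ∀ k, A (k + 1) - A k = n ∨ A (k + 1) - A k = n + 1 := by
  obtain ⟨A, hA, hrange, hgap⟩ := Int.exists_strictMono_range_eq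
    (hc.not_bddAbove_junctionColumns (by omega)) (hc.not_bddBelow_junctionColumns (by omega))
  have hmem : ∀ k, A k ∈ junctionColumns c := fun k => hrange ▸ ⟨k, rfl⟩
  refine ⟨A, hA, hrange, fun k => ?_⟩
  have hlt := hA (lt_add_one k)
  have := hc.le_sub_of_consecutive (by omega) (hmem k) (hmem (k + 1)) hlt (hgap k)
  have := hc.sub_le_of_consecutive hn (hmem k) (hmem (k + 1)) hlt (hgap k)
  omega

end ValidConfig

/-- in every configuration of `Ω'_n`, the positions of junction tiles form a
Cartesian product `A(ℤ) × B(ℤ)` with gaps `n` or `n+1`. -/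
theorem stmt10 (n : ℤ) (hn : 1 ≤ n) (c : ℤ × ℤ → WangTile Lbl)
    (hc : ValidConfig (Text n) c) :
    ∃ A B : ℤ → ℤ, StrictMono A ∧ StrictMono B ∧
      {m : ℤ × ℤ | c m ∈ junctions n} = Set.range A ×ˢ Set.range B ∧
      (∀ k : ℤ, A (k + 1) - A k = n ∨ A (k + 1) - A k = n + 1) ∧
      (∀ k : ℤ, B (k + 1) - B k = n ∨ B (k + 1) - B k = n + 1) := by
  obtain ⟨A, hA, hAr, hAg⟩ := hc.exists_strictMono_range_eq_junctionColumns hn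
  obtain ⟨B, hB, hBr, hBg⟩ :=
    (hc.transpose hatT_mem_Text).exists_strictMono_range_eq_junctionColumns hn
  refine ⟨A, B, hA, hB, ?_, hAg, hBg⟩
  ext ⟨x, y⟩
  rw [hAr, hBr]
  exact hc.mem_junctions_iff x y
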